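/- For any even integer D ≥ 2 and for infinitely many values of N, there exists an N-vertex D-regular graph G* whose smallest adjacency-matrix eigenvalue is λ_min = −2 and which satisfies N − Z(G*) ≥ 4N/(D+2) − 2. (Such a G* can be taken to be the line graph of a Hamiltonian d-regular graph with D = 2d−2.) -/

import Mathlib

namespace ZeroForcing

variable {V : Type*}

/-- The set of vertices which eventually become black in the zero forcing process on `G`
starting from the initially black set `S`. -/
inductive Forced (G : SimpleGraph V) (S : Set V) : V → Prop
  | init (v : V) (hv : v ∈ S) : Forced G S v
  | force (u w : V) (hu : Forced G S u) (hadj : G.Adj u w)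
      (hothers : ∀ x, G.Adj u x → x ≠ w → Forced G S x) : Forced G S w

/-- `S` is a zero forcing set of `G` if iterating the forcing rule makes every vertex black. -/
def IsZeroForcingSet (G : SimpleGraph V) (S : Set V) : Prop := ∀ v, Forced G S v

/-- The zero forcing number of `G`: the minimum cardinality of a zero forcing set. -/
noncomputable def zeroForcingNumber (G : SimpleGraph V) [Fintype V] : ℕ :=
  sInf {k | ∃ S : Finset V, S.card = k ∧ IsZeroForcingSet G ↑S}


/-- The adjacency matrix of a graph over `ℝ` is Hermitian. -/
lemma adjMatrix_isHermitian {V : Type*} [Fintype V] (G : SimpleGraph V)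
    [DecidableRel G.Adj] : (G.adjMatrix ℝ).IsHermitian := by
  rw [Matrix.IsHermitian, Matrix.conjTranspose_eq_transpose_of_trivial]
  exact G.isSymm_adjMatrix

open scoped Classical in
/-- The eigenvalues of the adjacency matrix of `G`. -/
noncomputable def adjEigenvalues {n : ℕ} (G : SimpleGraph (Fin n)) : Fin n → ℝ :=
  (adjMatrix_isHermitian G).eigenvalues

/-- The smallest adjacency-matrix eigenvalue of `G`. -/
noncomputable def lambdaMin {n : ℕ} (G : SimpleGraph (Fin n)) : ℝ :=
  ⨅ i, adjEigenvalues G i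

open scoped Classical in
/-- An `(n, d, λ)`-graph: a `d`-regular graph on `n` vertices all of whose
adjacency eigenvalues except the largest one (which equals `d`) are at most `lam`
in absolute value. -/
def IsNDLGraph {n : ℕ} (G : SimpleGraph (Fin n)) (d : ℕ) (lam : ℝ) : Prop :=
  G.IsRegularOfDegree d ∧
    ∃ i₀ : Fin n, adjEigenvalues G i₀ = d ∧ ∀ i : Fin n, i ≠ i₀ → |adjEigenvalues G i| ≤ lam

open scoped Classical in
/-- `e(U, W)`: the number of edges with one endpoint in `U` and the other in `W`,
where edges with both endpoints in `U ∩ W` are counted twice. -/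
noncomputable def edgeCountBetween {n : ℕ} (G : SimpleGraph (Fin n))
    (U W : Finset (Fin n)) : ℕ :=
  ((U ×ˢ W).filter fun p => G.Adj p.1 p.2).card

end ZeroForcing

/-!
Let `d = D/2 + 1` and let `H` be a `d`-regular circulant graph on `ZMod m`, `m` even, whose jumps
contain `±1`; the graph `G*` is its line graph, which is `(2d - 2)`-regular on `N = dm/2` vertices.
If `B` is the vertex-edge incidence matrix of `H`, then `A(G*) + 2I = BᵀB` is positive
semidefinite, and the vector that alternates `±1` along the even Hamiltonian cycle `0, 1, …, m-1`
lies in the kernel of `B`, so `λ_min(G*) = -2`. Colour black every edge of `H` except the `m - 2`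
inner edges of the Hamiltonian path `0, 1, …, m-1`: each edge of the path then forces the next
one, so `Z(G*) ≤ N - (m - 2)`, while `4N/(D+2) = m`.
-/

open Finset Matrix

namespace ZMod

theorem injOn_natCast {m : ℕ} : Set.InjOn (Nat.cast : ℕ → ZMod m) (Set.Iio m) :=
  fun a ha b hb hab ↦ by rw [← val_cast_of_lt ha, ← val_cast_of_lt hb, hab]

theorem neg_one_pow_val_add_one {R : Type*} [Ring R] {m : ℕ} [NeZero m] (hm : Even m)
    (i : ZMod m) : (-1 : R) ^ (i + 1).val = -(-1) ^ i.val := by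
  obtain ⟨k, rfl⟩ := hm
  have h1 : 1 % (k + k) = 1 := Nat.mod_eq_of_lt (by have := NeZero.ne (k + k); omega)
  rw [val_add, val_one_eq_one_mod, h1, neg_one_pow_eq_pow_mod_two,
    Nat.mod_mod_of_dvd _ ⟨k, by ring⟩, ← neg_one_pow_eq_pow_mod_two, pow_succ, mul_neg_one]

/-- The jumps `±1, …, ±⌊d/2⌋`, together with `m/2` when `d` is odd. -/
theorem exists_symmetric_finset {m d : ℕ} (hm : Even m) (hd : 2 ≤ d) (hdm : d < m) :
    ∃ s : Finset (ZMod m), 0 ∉ s ∧ (∀ x ∈ s, -x ∈ s) ∧ 1 ∈ s ∧ #s = d := by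
  obtain ⟨k, rfl⟩ := hm
  set t := d / 2
  set A : Finset ℕ := Icc 1 t ∪ Icc (k + k - t) (k + k - 1) ∪ if d % 2 = 1 then {k} else ∅
  have memA (a : ℕ) : a ∈ A ↔
      1 ≤ a ∧ a ≤ t ∨ k + k - t ≤ a ∧ a ≤ k + k - 1 ∨ d % 2 = 1 ∧ a = k := by
    simp only [A, mem_union, mem_Icc]
    split_ifs with h <;> simp [h, or_assoc]
  have hA : ∀ a ∈ A, 1 ≤ a ∧ a < k + k ∧ k + k - a ∈ A := fun a ha ↦ by
    rw [memA] at ha ⊢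
    omega
  refine ⟨A.image (↑), ?_, ?_, mem_image.2 ⟨1, (memA 1).2 (by omega), Nat.cast_one⟩, ?_⟩
  · simp only [mem_image, natCast_eq_zero_iff, not_exists, not_and]
    intro a ha hdvd
    have := Nat.le_of_dvd (hA a ha).1 hdvd
    have := (hA a ha).2.1
    omega
  · simp only [mem_image, forall_exists_index, and_imp, forall_apply_eq_imp_iff₂]
    intro a ha
    refine ⟨k + k - a, (hA a ha).2.2, ?_⟩
    rw [Nat.cast_sub (hA a ha).2.1.le, natCast_self, zero_sub]
  · rw [card_image_of_injOn (injOn_natCast.mono fun a ha ↦ (hA a ha).2.1),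
      card_union_of_disjoint, card_union_of_disjoint, Nat.card_Icc, Nat.card_Icc]
    · split_ifs <;> simp <;> omega
    · exact disjoint_left.2 fun a h₁ h₂ ↦ by simp only [mem_Icc] at h₁ h₂; omega
    · refine disjoint_left.2 fun a h₁ h₂ ↦ ?_
      simp only [mem_union, mem_Icc] at h₁
      split_ifs at h₂ <;> simp at h₂
      omega

end ZMod

namespace Matrix

variable {n ι : Type*} [Fintype n] [DecidableEq n] [Fintype ι]

theorem IsHermitian.neg_le_eigenvalues {A : Matrix n n ℝ} (hA : A.IsHermitian) {c : ℝ}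
    (hAc : (A + c • 1).PosSemidef) (i : n) : -c ≤ hA.eigenvalues i := by
  set v : n → ℝ := ⇑(hA.eigenvectorBasis i)
  have hv : v ≠ 0 := fun h ↦
    hA.eigenvectorBasis.orthonormal.ne_zero i (by ext j; exact congrFun h j)
  have hquad := hAc.dotProduct_mulVec_nonneg v
  rw [add_mulVec, hA.mulVec_eigenvectorBasis, smul_mulVec, one_mulVec, ← add_smul,
    dotProduct_smul, star_trivial, smul_eq_mul] at hquad
  have hpos : 0 < v ⬝ᵥ v := by simpa using dotProduct_self_star_pos_iff.2 hv
  nlinarith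

theorem IsHermitian.neg_mem_range_eigenvalues {A : Matrix n n ℝ} (hA : A.IsHermitian) {c : ℝ}
    {y : n → ℝ} (hy : y ≠ 0) (hAy : (A + c • 1) *ᵥ y = 0) :
    -c ∈ Set.range hA.eigenvalues := by
  rw [← hA.spectrum_real_eq_range_eigenvalues, ← spectrum_toLin']
  refine Module.End.HasEigenvalue.mem_spectrum
    (Module.End.hasEigenvalue_of_hasEigenvector ⟨?_, hy⟩)
  rw [Module.End.mem_eigenspace_iff, toLin'_apply, neg_smul, eq_neg_iff_add_eq_zero]
  simpa [add_mulVec, smul_mulVec] using hAy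

theorem IsHermitian.iInf_eigenvalues_eq_neg {A : Matrix n n ℝ} (hA : A.IsHermitian)
    {B : Matrix ι n ℝ} {c : ℝ} (hAB : A + c • 1 = Bᵀ * B) {y : n → ℝ} (hy : y ≠ 0)
    (hBy : B *ᵥ y = 0) : ⨅ i, hA.eigenvalues i = -c := by
  have hpsd : (A + c • 1).PosSemidef := by
    simpa [hAB, conjTranspose_eq_transpose_of_trivial] using posSemidef_conjTranspose_mul_self B
  obtain ⟨i₀, hi₀⟩ :=
    hA.neg_mem_range_eigenvalues hy (by rw [hAB, ← mulVec_mulVec, hBy, mulVec_zero])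
  have : Nonempty n := ⟨i₀⟩
  exact le_antisymm (hi₀ ▸ ciInf_le (Set.finite_range _).bddBelow i₀)
    (le_ciInf (hA.neg_le_eigenvalues hpsd))

end Matrix

namespace SimpleGraph

theorem circulantGraph_degree {G : Type*} [AddCommGroup G] [Fintype G] [DecidableEq G]
    {s : Finset G} (h0 : 0 ∉ s) (hneg : ∀ x ∈ s, -x ∈ s) (u : G) :
    (circulantGraph (s : Set G)).degree u = #s := by
  suffices (circulantGraph (s : Set G)).neighborFinset u = s.map (addLeftEmbedding u) by
    rw [← card_neighborFinset_eq_degree, this, card_map]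
  ext v
  simp only [mem_neighborFinset, circulantGraph_adj, mem_coe, mem_map, addLeftEmbedding_apply]
  constructor
  · rintro ⟨-, h | h⟩
    · exact ⟨-(u - v), hneg _ h, by abel⟩
    · exact ⟨v - u, h, by abel⟩
  · rintro ⟨a, ha, rfl⟩
    refine ⟨fun h ↦ h0 ?_, Or.inr (by simpa using ha)⟩
    rwa [left_eq_add.1 h] at ha

theorem circulantGraph_adj_add_of_mem {G : Type*} [AddCommGroup G] {s : Set G} {a : G}
    (ha : a ∈ s) (ha0 : a ≠ 0) (u : G) : (circulantGraph s).Adj u (u + a) := by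
  simp [circulantGraph_adj, ha0, ha]

theorem exists_circulantGraph_isRegularOfDegree {m d : ℕ} [NeZero m] (hm : Even m) (hd : 2 ≤ d)
    (hdm : d < m) :
    ∃ s : Finset (ZMod m), (circulantGraph (s : Set (ZMod m))).IsRegularOfDegree d ∧
      ∀ i, (circulantGraph (s : Set (ZMod m))).Adj i (i + 1) := by
  obtain ⟨s, h0, hneg, h1, hcard⟩ := ZMod.exists_symmetric_finset hm hd hdm
  exact ⟨s, fun u ↦ (circulantGraph_degree h0 hneg u).trans hcard,
    circulantGraph_adj_add_of_mem h1 (ne_of_mem_of_not_mem h1 h0)⟩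

theorem Iso.isRegularOfDegree {V W : Type*} {G : SimpleGraph V} {G' : SimpleGraph W}
    [G.LocallyFinite] [G'.LocallyFinite] (φ : G ≃g G') {d : ℕ} (h : G.IsRegularOfDegree d) :
    G'.IsRegularOfDegree d := fun w ↦ by
  rw [← φ.apply_symm_apply w, φ.degree_eq]
  exact h.degree_eq _

theorem IsRegularOfDegree.two_mul_card_edgeSet {V : Type*} [Fintype V] [DecidableEq V]
    {G : SimpleGraph V} [DecidableRel G.Adj] {d : ℕ} (h : G.IsRegularOfDegree d) :
    2 * Fintype.card G.edgeSet = Fintype.card V * d := by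
  rw [← edgeFinset_card, ← sum_degrees_eq_twice_card_edges]
  simp [h.degree_eq]

section Incidence

variable {V R : Type*} [DecidableEq V] {H : SimpleGraph V} [DecidableRel H.Adj]

theorem incMatrix_apply_mk_of_adj [NonAssocSemiring R] {a x y : V} (h : H.Adj x y) :
    H.incMatrix R a s(x, y) = (if x = a then 1 else 0) + if y = a then 1 else 0 := by
  simp only [incMatrix_apply', incidenceSet, Set.mem_ofPred_eq, mem_edgeSet, h, true_and,
    Sym2.mem_iff, @eq_comm _ a]
  by_cases hx : x = a <;> by_cases hy : y = a <;> simp_all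

variable [Fintype V]

theorem incMatrix_transpose_mul_apply_of_ne [NonAssocSemiring R] {e f : Sym2 V}
    (he : e ∈ H.edgeSet) (hf : f ∈ H.edgeSet) (hef : e ≠ f) :
    ((H.incMatrix R)ᵀ * H.incMatrix R) e f = if ∃ a ∈ e, a ∈ f then 1 else 0 := by
  simp only [mul_apply, transpose_apply, incMatrix_apply', ite_zero_mul_ite_zero, one_mul,
    sum_boole, incidenceSet, Set.mem_ofPred_eq, he, hf, true_and]
  split_ifs with h
  · obtain ⟨a, hae, haf⟩ := h
    suffices (univ.filter fun b ↦ b ∈ e ∧ b ∈ f) = {a} by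
      rw [this, card_singleton, Nat.cast_one]
    ext b
    simp only [mem_filter, mem_univ, true_and, mem_singleton]
    refine ⟨fun ⟨hbe, hbf⟩ ↦ by_contra fun hba ↦ hef ?_, fun h ↦ h ▸ ⟨hae, haf⟩⟩
    exact ((Sym2.mem_and_mem_iff hba).1 ⟨hbe, hae⟩).trans
      ((Sym2.mem_and_mem_iff hba).1 ⟨hbf, haf⟩).symm
  · push Not at h
    simp [filter_eq_empty_iff.2 fun b _ ↦ not_and.2 (h b)]

theorem adjMatrix_lineGraph_add_two_smul_one [NonAssocSemiring R]
    [DecidableRel H.lineGraph.Adj] :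
    H.lineGraph.adjMatrix R + (2 : R) • 1 =
      ((H.incMatrix R).submatrix id (↑))ᵀ * (H.incMatrix R).submatrix id (↑) := by
  ext e f
  rw [transpose_submatrix, ← submatrix_mul _ _ _ _ _ Function.bijective_id, submatrix_apply]
  obtain rfl | hef := eq_or_ne e f
  · simp [incMatrix_transpose_mul_diag, e.2]
  · rw [incMatrix_transpose_mul_apply_of_ne e.2 f.2 (Subtype.coe_ne_coe.2 hef)]
    simp [lineGraph_adj_iff_exists, hef]

theorem sum_incMatrix_apply_edgeSet [NonAssocSemiring R] [Fintype H.edgeSet] (a : V) :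
    ∑ f : H.edgeSet, H.incMatrix R a f = H.degree a := by
  rw [← sum_incMatrix_apply, ← Finset.sum_subtype H.edgeFinset (fun _ ↦ mem_edgeFinset)]
  exact Finset.sum_subset (subset_univ _) fun f _ hf ↦
    incMatrix_of_notMem_incidenceSet (G := H) (R := R) fun h ↦ hf (mem_edgeFinset.2 h.1)

theorem IsRegularOfDegree.lineGraph [DecidableRel H.lineGraph.Adj] [Fintype H.edgeSet] {d : ℕ}
    (h : H.IsRegularOfDegree d) : H.lineGraph.IsRegularOfDegree (2 * d - 2) := by
  intro e
  have : H.lineGraph.degree e + 2 = 2 * d := calc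
    _ = ((H.lineGraph.adjMatrix ℕ + (2 : ℕ) • 1) *ᵥ 1) e := by simp [add_mulVec]
    _ = ∑ a, H.incMatrix ℕ a e * ∑ f : H.edgeSet, H.incMatrix ℕ a f := by
      rw [adjMatrix_lineGraph_add_two_smul_one, ← mulVec_mulVec]
      simp [mulVec, dotProduct]
    _ = 2 * d := by
      simp only [sum_incMatrix_apply_edgeSet, h.degree_eq, ← sum_mul,
        sum_incMatrix_apply_of_mem_edgeSet (G := H) e.2, Nat.cast_id]
  omega

end Incidence

section AlternatingEdgeSigns

variable {V R : Type*} [DecidableEq V] [Ring R] {m : ℕ} [NeZero m]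

noncomputable def alternatingEdgeSigns (v : ZMod m → V) (e : Sym2 V) : R :=
  ∑ i, if e = s(v i, v (i + 1)) then (-1) ^ i.val else 0

theorem alternatingEdgeSigns_mk_zero_one (hm : 2 < m) {v : ZMod m → V}
    (hv : Function.Injective v) : alternatingEdgeSigns (R := R) v s(v 0, v 1) = 1 := by
  rw [alternatingEdgeSigns, Finset.sum_eq_single 0 _ (by simp)]
  · simp
  intro i _ hi
  refine if_neg ?_
  rw [Sym2.eq_iff, hv.eq_iff, hv.eq_iff, hv.eq_iff, hv.eq_iff]
  rintro (⟨h, -⟩ | ⟨h0, h1⟩)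
  · exact hi h.symm
  · have : ((2 : ℕ) : ZMod m) = 0 := by
      subst h1
      push_cast
      linear_combination -h0
    rw [ZMod.natCast_eq_zero_iff] at this
    exact absurd (Nat.le_of_dvd two_pos this) (by omega)

variable {H : SimpleGraph V} [DecidableRel H.Adj]

theorem incMatrix_mulVec_alternatingEdgeSigns [Fintype H.edgeSet] (hm : Even m)
    {v : ZMod m → V} (hadj : ∀ i, H.Adj (v i) (v (i + 1))) :
    (H.incMatrix R).submatrix id (↑) *ᵥ
      (fun e : H.edgeSet ↦ alternatingEdgeSigns (R := R) v e) = 0 := by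
  funext a
  have hsingle (i : ZMod m) : ∑ e : H.edgeSet, H.incMatrix R a e *
      (if (e : Sym2 V) = s(v i, v (i + 1)) then (-1) ^ i.val else 0) =
      H.incMatrix R a s(v i, v (i + 1)) * (-1) ^ i.val := by
    rw [Finset.sum_eq_single ⟨_, hadj i⟩
      (fun e _ he ↦ by rw [if_neg (Subtype.coe_ne_coe.2 he), mul_zero]) (by simp)]
    simp
  have hshift : ∑ i : ZMod m, (if v (i + 1) = a then (1 : R) else 0) * (-1) ^ i.val =
      -∑ i : ZMod m, (if v i = a then (1 : R) else 0) * (-1) ^ i.val := by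
    rw [← sum_neg_distrib]
    exact Fintype.sum_bijective (· + 1) (AddGroup.addRight_bijective 1) _ _ fun i ↦ by
      simp [ZMod.neg_one_pow_val_add_one hm]
  have hinc (i : ZMod m) := incMatrix_apply_mk_of_adj (R := R) (a := a) (hadj i)
  simp only [mulVec, dotProduct, alternatingEdgeSigns, submatrix_apply, id, mul_sum]
  rw [sum_comm]
  simp only [hsingle, hinc, add_mul, sum_add_distrib, hshift, add_neg_cancel, Pi.zero_apply]

end AlternatingEdgeSigns

end SimpleGraph

namespace ZeroForcing

open SimpleGraph

theorem lambdaMin_eq_neg_of_adjMatrix_add_smul_one {n : ℕ} {G : SimpleGraph (Fin n)}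
    [DecidableRel G.Adj] {ι : Type*} [Fintype ι] {B : Matrix ι (Fin n) ℝ} {c : ℝ}
    (hB : G.adjMatrix ℝ + c • 1 = Bᵀ * B) {y : Fin n → ℝ} (hy : y ≠ 0)
    (hBy : B *ᵥ y = 0) : lambdaMin G = -c := by
  unfold lambdaMin adjEigenvalues
  convert (adjMatrix_isHermitian G).iInf_eigenvalues_eq_neg hB hy hBy

theorem lambdaMin_eq_neg_two_of_iso_lineGraph {V : Type*} [Fintype V] {H : SimpleGraph V}
    {n : ℕ} {G : SimpleGraph (Fin n)} (φ : G ≃g H.lineGraph) {m : ℕ} (hm : Even m)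
    (hm2 : 2 < m) {v : ZMod m → V} (hv : Function.Injective v)
    (hadj : ∀ i, H.Adj (v i) (v (i + 1))) : lambdaMin G = -2 := by
  classical
  have : NeZero m := ⟨by omega⟩
  set B := (H.incMatrix ℝ).submatrix id ((↑) : H.edgeSet → Sym2 V)
  have hB : G.adjMatrix ℝ + (2 : ℝ) • 1 = (B.submatrix id φ)ᵀ * B.submatrix id φ := by
    rw [transpose_submatrix, ← submatrix_mul _ _ _ _ _ Function.bijective_id,
      ← adjMatrix_lineGraph_add_two_smul_one]
    ext i j
    simp [one_apply, φ.map_adj_iff]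
  refine lambdaMin_eq_neg_of_adjMatrix_add_smul_one hB
    (y := fun i ↦ alternatingEdgeSigns v (φ i)) ?_ ?_
  · intro h
    have := congrFun h (φ.symm ⟨s(v 0, v 1), by simpa using hadj 0⟩)
    simp [alternatingEdgeSigns_mk_zero_one hm2 hv] at this
  · funext a
    have := congrFun (incMatrix_mulVec_alternatingEdgeSigns (R := ℝ) hm hadj) a
    rw [mulVec, dotProduct, ← φ.toEquiv.sum_comp] at this
    simpa [mulVec, dotProduct, B] using this

variable {V W : Type*}

section Iso

variable {G : SimpleGraph V} {G' : SimpleGraph W}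

theorem Forced.map (φ : G ≃g G') {S : Set V} {v : V} (h : Forced G S v) :
    Forced G' (φ '' S) (φ v) := by
  induction h with
  | init v hv => exact .init _ ⟨v, hv, rfl⟩
  | force u w _ hadj _ ihu ihx =>
    refine .force (φ u) (φ w) ihu (φ.map_adj_iff.2 hadj) fun x hx hxw ↦ ?_
    simpa using ihx (φ.symm x) (by simpa [← φ.map_adj_iff] using hx)
      (by rintro rfl; simp at hxw)

theorem IsZeroForcingSet.map (φ : G ≃g G') {S : Set V} (h : IsZeroForcingSet G S) :
    IsZeroForcingSet G' (φ '' S) :=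
  fun w ↦ by simpa using (h (φ.symm w)).map φ

theorem zeroForcingNumber_le [Fintype V] {S : Finset V} (h : IsZeroForcingSet G S) :
    zeroForcingNumber G ≤ #S :=
  Nat.sInf_le ⟨S, rfl, h⟩

theorem exists_isZeroForcingSet_card_eq [Fintype V] :
    ∃ S : Finset V, #S = zeroForcingNumber G ∧ IsZeroForcingSet G S :=
  Nat.sInf_mem (s := {k | ∃ S : Finset V, #S = k ∧ IsZeroForcingSet G S})
    ⟨_, univ, rfl, fun v ↦ .init v (by simp)⟩

theorem zeroForcingNumber_le_of_iso [Fintype V] [Fintype W] (φ : G ≃g G') :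
    zeroForcingNumber G' ≤ zeroForcingNumber G := by
  obtain ⟨S, hS, hZ⟩ := exists_isZeroForcingSet_card_eq (G := G)
  calc zeroForcingNumber G' ≤ #(S.map φ.toEquiv.toEmbedding) :=
        zeroForcingNumber_le (by simpa using hZ.map φ)
    _ = zeroForcingNumber G := by simp [hS]

end Iso

section LineGraphPath

variable {H : SimpleGraph V} {p : ℕ → V} {L : ℕ}

def pathEdge (p : ℕ → V) (i : ℕ) : Sym2 V := s(p i, p (i + 1))

theorem eq_or_eq_succ_of_mem_pathEdge (hp : Set.InjOn p (Set.Iic L)) {i j : ℕ} (hi : i < L)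
    (hj : j < L) {a : V} (hai : a ∈ pathEdge p i) (haj : a ∈ pathEdge p j) :
    i = j ∨ i = j + 1 ∨ j = i + 1 := by
  have key {k l : ℕ} (hk : k ≤ L) (hl : l ≤ L) (h : p k = p l) : k = l := hp hk hl h
  rw [pathEdge, Sym2.mem_iff] at hai haj
  rcases hai with rfl | rfl <;> rcases haj with h | h <;>
    have := key (by omega) (by omega) h <;> omega

theorem pathEdge_injOn (hp : Set.InjOn p (Set.Iic L)) : Set.InjOn (pathEdge p) (Set.Iio L) := by
  intro i hi j hj h
  have key {k l : ℕ} (hk : k ≤ L) (hl : l ≤ L) (h : p k = p l) : k = l := hp hk hl h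
  simp only [Set.mem_Iio] at hi hj
  rcases Sym2.eq_iff.1 h with ⟨h₁, -⟩ | ⟨h₁, h₂⟩
  · exact key (by omega) (by omega) h₁
  · have := key (by omega) (by omega) h₁
    have := key (by omega) (by omega) h₂
    omega

theorem forced_lineGraph_pathEdge (hp : Set.InjOn p (Set.Iic L))
    (hadj : ∀ i < L, H.Adj (p i) (p (i + 1))) {S : Set H.edgeSet}
    (hS : ∀ e ∉ S, ∃ i, 1 ≤ i ∧ i < L ∧ (e : Sym2 V) = pathEdge p i)
    (k : ℕ) (hk : k < L) : Forced H.lineGraph S ⟨pathEdge p k, hadj k hk⟩ := by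
  induction k using Nat.strong_induction_on with
  | _ k ih =>
  by_cases hkS : ⟨pathEdge p k, hadj k hk⟩ ∈ S
  · exact .init _ hkS
  obtain ⟨i, hi1, hiL, hki⟩ := hS _ hkS
  obtain rfl : k = i := pathEdge_injOn hp hk hiL hki
  obtain ⟨j, rfl⟩ : ∃ j, k = j + 1 := ⟨k - 1, by omega⟩
  -- the other neighbours of `pathEdge p j` are black or earlier path edges
  refine .force _ _ (ih j (by omega) (by omega)) ?_ fun x hx hxk ↦ ?_
  · refine lineGraph_adj_iff_exists.2
      ⟨fun h ↦ ?_, p (j + 1), by simp [pathEdge], by simp [pathEdge]⟩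
    have := pathEdge_injOn hp (Set.mem_Iio.2 (by omega)) hk (congrArg Subtype.val h)
    omega
  by_cases hxS : x ∈ S
  · exact .init _ hxS
  obtain ⟨l, -, hlL, hxl⟩ := hS x hxS
  obtain ⟨a, haj, hax⟩ := (lineGraph_adj_iff_exists.1 hx).2
  rw [hxl] at hax
  rcases eq_or_eq_succ_of_mem_pathEdge hp (by omega) hlL haj hax with rfl | h | rfl
  · exact absurd (Subtype.ext hxl.symm) hx.ne
  · obtain rfl : x = ⟨pathEdge p l, hadj l hlL⟩ := Subtype.ext hxl
    exact ih l (by omega) hlL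
  · exact absurd (Subtype.ext hxl) hxk

theorem isZeroForcingSet_lineGraph_of_pathEdge (hp : Set.InjOn p (Set.Iic L))
    (hadj : ∀ i < L, H.Adj (p i) (p (i + 1))) {S : Set H.edgeSet}
    (hS : ∀ e ∉ S, ∃ i, 1 ≤ i ∧ i < L ∧ (e : Sym2 V) = pathEdge p i) :
    IsZeroForcingSet H.lineGraph S := by
  intro e
  by_cases he : e ∈ S
  · exact .init e he
  obtain ⟨i, -, hiL, hei⟩ := hS e he
  obtain rfl : e = ⟨pathEdge p i, hadj i hiL⟩ := Subtype.ext hei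
  exact forced_lineGraph_pathEdge hp hadj hS i hiL

theorem zeroForcingNumber_lineGraph_add_le [Fintype H.edgeSet] [DecidableEq V]
    (hp : Set.InjOn p (Set.Iic L)) (hadj : ∀ i < L, H.Adj (p i) (p (i + 1))) :
    zeroForcingNumber H.lineGraph + (L - 1) ≤ Fintype.card H.edgeSet := by
  set W := (Ico 1 L).image (pathEdge p)
  have hW : #W = L - 1 := by
    rw [card_image_of_injOn (pathEdge_injOn hp |>.mono fun i hi ↦ by simp_all), Nat.card_Ico]
  have hWS : #W ≤ #(univ.filter fun e : H.edgeSet ↦ (e : Sym2 V) ∈ W) := by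
    refine card_le_card_of_surjOn Subtype.val fun w hw ↦ ?_
    obtain ⟨i, hi, rfl⟩ := mem_image.1 hw
    exact ⟨⟨pathEdge p i, hadj i (mem_Ico.1 hi).2⟩, by simpa using hw, rfl⟩
  have hZ := zeroForcingNumber_le (G := H.lineGraph)
    (S := univ.filter fun e : H.edgeSet ↦ (e : Sym2 V) ∉ W)
    (isZeroForcingSet_lineGraph_of_pathEdge hp hadj fun e he ↦ by
      obtain ⟨i, hi, hei⟩ := mem_image.1 (show (e : Sym2 V) ∈ W by simpa using he)
      exact ⟨i, (mem_Ico.1 hi).1, (mem_Ico.1 hi).2, hei.symm⟩)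
  have := card_filter_add_card_filter_not (s := (univ : Finset H.edgeSet))
    fun e ↦ (e : Sym2 V) ∈ W
  rw [card_univ] at this
  omega

theorem zeroForcingNumber_lineGraph_add_le_of_adj_add_one {m : ℕ} [NeZero m]
    {H : SimpleGraph (ZMod m)} [Fintype H.edgeSet] (hcyc : ∀ i, H.Adj i (i + 1)) :
    zeroForcingNumber H.lineGraph + (m - 2) ≤ Fintype.card H.edgeSet := by
  have hm := NeZero.pos m
  have := zeroForcingNumber_lineGraph_add_le (p := Nat.cast) (L := m - 1)
    ((ZMod.injOn_natCast (m := m)).mono (Set.Iic_subset_Iio.2 (by omega)))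
    fun i _ ↦ by simpa using hcyc i
  omega

end LineGraphPath

open scoped Classical in
/-- **Proposition 1**: for any even `D ≥ 2` and infinitely many `N` there is an `N`-vertex
`D`-regular graph `G*` with smallest adjacency eigenvalue `-2` and
`N - Z(G*) ≥ 4N/(D+2) - 2`. -/
theorem exists_regular_graph_large_forcing_gap (D : ℕ) (hD : 2 ≤ D) (hDeven : Even D)
    (N₀ : ℕ) :
    ∃ N : ℕ, N₀ ≤ N ∧ ∃ G : SimpleGraph (Fin N),
      G.IsRegularOfDegree D ∧ lambdaMin G = -2 ∧
        4 * (N : ℝ) / ((D : ℝ) + 2) - 2 ≤ (N : ℝ) - zeroForcingNumber G := by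
  obtain ⟨k, rfl⟩ := hDeven
  set d := k + 1 with hd
  set m := 2 * (N₀ + d) with hm_def
  have hm : Even m := even_two_mul _
  have : NeZero m := ⟨by omega⟩
  obtain ⟨s, hreg, hcyc⟩ :=
    exists_circulantGraph_isRegularOfDegree hm (d := d) (by omega) (by omega)
  set H := circulantGraph (s : Set (ZMod m))
  set N := Fintype.card H.edgeSet
  have hN : 2 * N = m * d := by rw [hreg.two_mul_card_edgeSet, ZMod.card]
  let φ := H.lineGraph.overFinIso (rfl : Fintype.card H.edgeSet = N)
  have hZ : zeroForcingNumber (H.lineGraph.overFin rfl) + (m - 2) ≤ N :=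
    (Nat.add_le_add_right (zeroForcingNumber_le_of_iso φ) _).trans
      (zeroForcingNumber_lineGraph_add_le_of_adj_add_one hcyc)
  refine ⟨N, by nlinarith, H.lineGraph.overFin rfl, ?_, ?_, ?_⟩
  · convert φ.isRegularOfDegree hreg.lineGraph using 1
    omega
  · exact lambdaMin_eq_neg_two_of_iso_lineGraph φ.symm hm (by omega) Function.injective_id hcyc
  · have hN' : (2 * N : ℝ) = m * d := by exact_mod_cast hN
    have hZ' := (Nat.cast_le (α := ℝ)).2 hZ
    push_cast [Nat.cast_sub (by omega : 2 ≤ m), hd] at hN' hZ' ⊢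
    rw [div_sub' (by positivity), div_le_iff₀ (by positivity)]
    nlinarith

end ZeroForcing
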